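/- arXiv:2503.01110 — 4 statements merged into one kernel-verified Lean document; each statement's English description precedes it below -/
import Mathlib

section
/- Let f : ℤ^n → ℝ ∪ {+∞} be an M-convex function with bounded dom f and let R ⊆ N with ∅ ≠ R ⊊ N. Then for every integer k with k̲ < k < k̄, it holds that z(k−1) + z(k+1) ≥ 2 z(k); equivalently, z(k) − z(k−1) ≤ z(k+1) − z(k), i.e., z is convex as a function of k on [k̲, k̄]. -/
noncomputable section

open scoped BigOperators

/-- The `i`-th unit vector in `ℤ^n`. -/
def chi {n : ℕ} (i : Fin n) : Fin n → ℤ := fun k => if k = i then 1 else 0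

/-- The function never takes the value `-∞`, i.e. its codomain is `ℝ ∪ {+∞}`. -/
def NoBot {n : ℕ} (f : (Fin n → ℤ) → EReal) : Prop := ∀ x, f x ≠ ⊥

/-- M-convexity: nonempty effective domain together with the exchange axiom (M-EXC). -/
def MConvexFn {n : ℕ} (f : (Fin n → ℤ) → EReal) : Prop :=
  (∃ x, f x ≠ ⊤) ∧
  ∀ x y : Fin n → ℤ, f x ≠ ⊤ → f y ≠ ⊤ →
    ∀ i : Fin n, y i < x i →
      ∃ j : Fin n, x j < y j ∧
        f (x - chi i + chi j) + f (y + chi i - chi j) ≤ f x + f y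

/-- The slopeZ `f'(x; i, j) = f(x + χ_i - χ_j) - f(x)`. -/
def slopeZ {n : ℕ} (f : (Fin n → ℤ) → EReal) (x : Fin n → ℤ) (i j : Fin n) : EReal :=
  f (x + chi i - chi j) - f x

/-- `φ(x) = min_{i, j ∈ N} f'(x; i, j)`. -/
def phi {n : ℕ} (f : (Fin n → ℤ) → EReal) (x : Fin n → ℤ) : EReal :=
  ⨅ i : Fin n, ⨅ j : Fin n, slopeZ f x i j

/-- Bounded effective domain. -/
def BddDom {n : ℕ} (f : (Fin n → ℤ) → EReal) : Prop :=
  ∃ C : ℤ, ∀ x : Fin n → ℤ, f x ≠ ⊤ → ∀ i, |x i| ≤ C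

/-- `x(R) = Σ_{i ∈ R} x(i)`. -/
def sumR {n : ℕ} (R : Finset (Fin n)) (x : Fin n → ℤ) : ℤ := ∑ i ∈ R, x i

/-- `k̲ = min { x(R) : x ∈ dom f }`. -/
def kmin {n : ℕ} (f : (Fin n → ℤ) → EReal) (R : Finset (Fin n)) : ℤ :=
  sInf {r : ℤ | ∃ x, f x ≠ ⊤ ∧ sumR R x = r}

/-- `k̄ = max { x(R) : x ∈ dom f }`. -/
def kmax {n : ℕ} (f : (Fin n → ℤ) → EReal) (R : Finset (Fin n)) : ℤ :=
  sSup {r : ℤ | ∃ x, f x ≠ ⊤ ∧ sumR R x = r}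

/-- `M(k)`: the set of minimizers of `f` over `{x ∈ dom f : x(R) = k}`. -/
def Mset {n : ℕ} (f : (Fin n → ℤ) → EReal) (R : Finset (Fin n)) (k : ℤ) :
    Set (Fin n → ℤ) :=
  {x | f x ≠ ⊤ ∧ sumR R x = k ∧ ∀ y : Fin n → ℤ, f y ≠ ⊤ → sumR R y = k → f x ≤ f y}

/-- `z(k) = min { f(x) : x ∈ dom f, x(R) = k }`. -/
def zval {n : ℕ} (f : (Fin n → ℤ) → EReal) (R : Finset (Fin n)) (k : ℤ) : EReal :=
  ⨅ (x : Fin n → ℤ) (_ : f x ≠ ⊤ ∧ sumR R x = k), f x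

/-- `φ^R(x) = min { f'(x; i, j) : i ∈ R, j ∈ N ∖ R }`. -/
def phiR {n : ℕ} (f : (Fin n → ℤ) → EReal) (R : Finset (Fin n)) (x : Fin n → ℤ) : EReal :=
  ⨅ i ∈ R, ⨅ j ∈ Rᶜ, slopeZ f x i j

open Classical

section Aux
variable {n : ℕ}

lemma sum_chi (R : Finset (Fin n)) (i : Fin n) :
    ∑ m ∈ R, chi i m = if i ∈ R then 1 else 0 := by
  simpa [chi] using Finset.sum_ite_eq' R i (fun _ => (1:ℤ))

lemma sumR_shift (R : Finset (Fin n)) (x : Fin n → ℤ) (i j : Fin n) :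
    sumR R (x + chi i - chi j)
      = sumR R x + (if i ∈ R then 1 else 0) - (if j ∈ R then 1 else 0) := by
  simp [sumR, Finset.sum_sub_distrib, Finset.sum_add_distrib, sum_chi]

lemma sumR_shift' (R : Finset (Fin n)) (x : Fin n → ℤ) (i j : Fin n) :
    sumR R (x - chi i + chi j)
      = sumR R x - (if i ∈ R then 1 else 0) + (if j ∈ R then 1 else 0) := by
  simp [sumR, Finset.sum_sub_distrib, Finset.sum_add_distrib, sum_chi]

/-- ℓ¹ distance (as a natural number). -/
def dist1 (x y : Fin n → ℤ) : ℕ := ∑ m : Fin n, (x m - y m).natAbs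

lemma dist1_lt {x y : Fin n → ℤ} {i j : Fin n} (hi : x i < y i) (hj : y j < x j) :
    dist1 (x + chi i - chi j) y < dist1 x y := by
  have hij : i ≠ j := by intro h; subst h; omega
  apply Finset.sum_lt_sum
  · intro m _
    by_cases h1 : m = i
    · subst h1; simp [chi, hij]; omega
    · by_cases h2 : m = j
      · subst h2; simp [chi, Ne.symm hij]; omega
      · simp [chi, h1, h2]
  · exact ⟨i, Finset.mem_univ i, by simp [chi, hij]; omega⟩

variable {f : (Fin n → ℤ) → EReal}

lemma exchange' (hbot : NoBot f) (hM : MConvexFn f)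
    {x y : Fin n → ℤ} (hx : f x ≠ ⊤) (hy : f y ≠ ⊤) {i : Fin n} (hi : x i < y i) :
    ∃ j, y j < x j ∧ f (x + chi i - chi j) ≠ ⊤ ∧ f (y - chi i + chi j) ≠ ⊤ ∧
      f (x + chi i - chi j) + f (y - chi i + chi j) ≤ f x + f y := by
  obtain ⟨j, hj, hle⟩ := hM.2 y x hy hx i hi
  have htop : f y + f x ≠ ⊤ := (EReal.add_lt_top hy hx).ne
  have h1 : f (y - chi i + chi j) ≠ ⊤ := by
    intro h
    rw [h, EReal.top_add_of_ne_bot (hbot _)] at hle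
    exact htop (top_le_iff.mp hle)
  have h2 : f (x + chi i - chi j) ≠ ⊤ := by
    intro h
    rw [h, EReal.add_top_of_ne_bot (hbot _)] at hle
    exact htop (top_le_iff.mp hle)
  refine ⟨j, hj, h2, h1, ?_⟩
  calc f (x + chi i - chi j) + f (y - chi i + chi j)
      = f (y - chi i + chi j) + f (x + chi i - chi j) := add_comm _ _
    _ ≤ f y + f x := hle
    _ = f x + f y := add_comm _ _

lemma sumR_bdd {C : ℤ} {x : Fin n → ℤ} (h : ∀ i, |x i| ≤ C) (R : Finset (Fin n)) :
    -(R.card * C) ≤ sumR R x ∧ sumR R x ≤ R.card * C := by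
  constructor
  · have : ∑ i ∈ R, (-C) ≤ ∑ i ∈ R, x i :=
      Finset.sum_le_sum fun i _ => (abs_le.mp (h i)).1
    simpa [sumR, mul_comm] using this
  · have : ∑ i ∈ R, x i ≤ ∑ i ∈ R, C :=
      Finset.sum_le_sum fun i _ => (abs_le.mp (h i)).2
    simpa [sumR, mul_comm] using this

lemma kmin_mem (hM : MConvexFn f) (hbdd : BddDom f) (R : Finset (Fin n)) :
    ∃ x, f x ≠ ⊤ ∧ sumR R x = kmin f R := by
  obtain ⟨x0, hx0⟩ := hM.1
  obtain ⟨C, hC⟩ := hbdd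
  have hne : {r : ℤ | ∃ x, f x ≠ ⊤ ∧ sumR R x = r}.Nonempty := ⟨_, x0, hx0, rfl⟩
  have hbdd' : BddBelow {r : ℤ | ∃ x, f x ≠ ⊤ ∧ sumR R x = r} := by
    refine ⟨-(R.card * C), ?_⟩
    rintro r ⟨x, hx, rfl⟩
    exact (sumR_bdd (hC x hx) R).1
  exact Int.csInf_mem hne hbdd'

lemma kmax_mem (hM : MConvexFn f) (hbdd : BddDom f) (R : Finset (Fin n)) :
    ∃ x, f x ≠ ⊤ ∧ sumR R x = kmax f R := by
  obtain ⟨x0, hx0⟩ := hM.1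
  obtain ⟨C, hC⟩ := hbdd
  have hne : {r : ℤ | ∃ x, f x ≠ ⊤ ∧ sumR R x = r}.Nonempty := ⟨_, x0, hx0, rfl⟩
  have hbdd' : BddAbove {r : ℤ | ∃ x, f x ≠ ⊤ ∧ sumR R x = r} := by
    refine ⟨R.card * C, ?_⟩
    rintro r ⟨x, hx, rfl⟩
    exact (sumR_bdd (hC x hx) R).2
  exact Int.csSup_mem hne hbdd'

lemma exists_lt_mem {R : Finset (Fin n)} {a b : Fin n → ℤ}
    (h : sumR R a < sumR R b) : ∃ i ∈ R, a i < b i := by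
  by_contra hc
  push_neg at hc
  exact absurd (Finset.sum_le_sum hc) (by simpa [sumR] using h.not_ge)

lemma level_nonempty (hbot : NoBot f) (hM : MConvexFn f) (hbdd : BddDom f)
    (R : Finset (Fin n)) (k : ℤ) (h1 : kmin f R ≤ k) (h2 : k ≤ kmax f R) :
    ∃ x, f x ≠ ⊤ ∧ sumR R x = k := by
  obtain ⟨x0, hx0, hx0s⟩ := kmin_mem hM hbdd R
  obtain ⟨y0, hy0, hy0s⟩ := kmax_mem hM hbdd R
  set P : ℕ → Prop := fun m =>
    ∃ x y, f x ≠ ⊤ ∧ f y ≠ ⊤ ∧ sumR R x ≤ k ∧ k ≤ sumR R y ∧ dist1 x y = m with hPdef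
  have hP : ∃ m, P m := ⟨_, x0, y0, hx0, hy0, by omega, by omega, rfl⟩
  obtain ⟨x, y, hfx, hfy, hxk, hyk, hd⟩ := Nat.find_spec hP
  rcases eq_or_lt_of_le hxk with h | h
  · exact ⟨x, hfx, h⟩
  rcases eq_or_lt_of_le hyk with h' | h'
  · exact ⟨y, hfy, h'.symm⟩
  obtain ⟨i, hiR, hi⟩ := exists_lt_mem (R := R) (a := x) (b := y) (by omega)
  obtain ⟨j, hj, h2top, h1top, hle⟩ := exchange' hbot hM hfx hfy hi
  exfalso
  have hdec : dist1 (x + chi i - chi j) y < Nat.find hP := hd ▸ dist1_lt hi hj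
  refine Nat.find_min hP hdec ⟨x + chi i - chi j, y, h2top, hfy, ?_, hyk, rfl⟩
  rw [sumR_shift]
  simp only [hiR, if_true]
  split <;> omega

lemma exists_min (hbdd : BddDom f) {R : Finset (Fin n)} {k : ℤ}
    (h : ∃ x, f x ≠ ⊤ ∧ sumR R x = k) : ∃ a, a ∈ Mset f R k := by
  obtain ⟨C, hC⟩ := hbdd
  set S : Set (Fin n → ℤ) := {x | f x ≠ ⊤ ∧ sumR R x = k} with hS
  have hfin : S.Finite := by
    refine (Set.finite_Icc (fun _ => -C) (fun _ => C)).subset ?_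
    rintro x ⟨hx, -⟩
    constructor <;> intro i
    · exact (abs_le.mp (hC x hx i)).1
    · exact (abs_le.mp (hC x hx i)).2
  obtain ⟨a, ha, hmin⟩ := Set.exists_min_image S f hfin h
  exact ⟨a, ha.1, ha.2, fun y hy1 hy2 => hmin y ⟨hy1, hy2⟩⟩

lemma zval_le {R : Finset (Fin n)} {k : ℤ} {x : Fin n → ℤ}
    (h1 : f x ≠ ⊤) (h2 : sumR R x = k) : zval f R k ≤ f x :=
  iInf₂_le x ⟨h1, h2⟩

lemma zval_eq {R : Finset (Fin n)} {k : ℤ} {a : Fin n → ℤ}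
    (ha : a ∈ Mset f R k) : zval f R k = f a := by
  refine le_antisymm (zval_le ha.1 ha.2.1) (le_iInf₂ fun y hy => ha.2.2 y hy.1 hy.2)

lemma ereal_cancel {a b c d : EReal}
    (ha : a ≠ ⊤) (ha' : a ≠ ⊥) (hb : b ≠ ⊤) (hb' : b ≠ ⊥)
    (hc : c ≠ ⊤) (hc' : c ≠ ⊥) (hd : d ≠ ⊤) (hd' : d ≠ ⊥)
    (h1 : d + c ≤ b + a) (h2 : a ≤ c) : d ≤ b := by
  lift a to ℝ using ⟨ha, ha'⟩
  lift b to ℝ using ⟨hb, hb'⟩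
  lift c to ℝ using ⟨hc, hc'⟩
  lift d to ℝ using ⟨hd, hd'⟩
  rw [← EReal.coe_add, ← EReal.coe_add, EReal.coe_le_coe_iff] at h1
  rw [EReal.coe_le_coe_iff] at h2 ⊢
  linarith

end Aux

/-- Convexity of the optimal value function `z`: for `k̲ < k < k̄`,
`z(k-1) + z(k+1) ≥ 2 z(k)`, i.e. `z(k) - z(k-1) ≤ z(k+1) - z(k)`. -/
theorem statement6 {n : ℕ} (hn : 1 ≤ n) (f : (Fin n → ℤ) → EReal)
    (hbot : NoBot f) (hM : MConvexFn f) (hbdd : BddDom f)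
    (R : Finset (Fin n)) (hR : R.Nonempty) (hRp : R ≠ Finset.univ)
    (k : ℤ) (hk1 : kmin f R < k) (hk2 : k < kmax f R) :
    zval f R k + zval f R k ≤ zval f R (k - 1) + zval f R (k + 1) := by
  classical
  have hkm1 : kmin f R ≤ k - 1 := by omega
  have hkp1 : k + 1 ≤ kmax f R := by omega
  obtain ⟨am, ham⟩ := exists_min hbdd
    (level_nonempty hbot hM hbdd R (k-1) hkm1 (by omega))
  obtain ⟨bm, hbm⟩ := exists_min hbdd
    (level_nonempty hbot hM hbdd R (k+1) (by omega) hkp1)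
  set P : ℕ → Prop := fun m =>
    ∃ a b, a ∈ Mset f R (k-1) ∧ b ∈ Mset f R (k+1) ∧ dist1 a b = m with hPdef
  have hP : ∃ m, P m := ⟨_, am, bm, ham, hbm, rfl⟩
  obtain ⟨a, b, ha, hb, hd⟩ := Nat.find_spec hP
  obtain ⟨hfa, hsa, hmina⟩ := ha
  obtain ⟨hfb, hsb, hminb⟩ := hb
  obtain ⟨i, hiR, hi⟩ := exists_lt_mem (R := R) (a := a) (b := b) (by omega)
  obtain ⟨j, hj, h2top, h1top, hle⟩ := exchange' hbot hM hfa hfb hi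
  by_cases hjR : j ∈ R
  · exfalso
    have hsb1 : sumR R (b - chi i + chi j) = k + 1 := by
      rw [sumR_shift']; simp [hiR, hjR]; omega
    have hsa1 : sumR R (a + chi i - chi j) = k - 1 := by
      rw [sumR_shift]; simp [hiR, hjR]; omega
    have hfble : f b ≤ f (b - chi i + chi j) := hminb _ h1top hsb1
    have hfale : f (a + chi i - chi j) ≤ f a :=
      ereal_cancel hfb (hbot b) hfa (hbot a) h1top (hbot _) h2top (hbot _) hle hfble
    have hmem : (a + chi i - chi j) ∈ Mset f R (k-1) :=
      ⟨h2top, hsa1, fun z hz1 hz2 => hfale.trans (hmina z hz1 hz2)⟩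
    have hdec : dist1 (a + chi i - chi j) b < Nat.find hP := hd ▸ dist1_lt hi hj
    exact Nat.find_min hP hdec ⟨_, b, hmem, ⟨hfb, hsb, hminb⟩, rfl⟩
  · have hsa1 : sumR R (a + chi i - chi j) = k := by
      rw [sumR_shift]; simp [hiR, hjR]; omega
    have hsb1 : sumR R (b - chi i + chi j) = k := by
      rw [sumR_shift']; simp [hiR, hjR]; omega
    calc zval f R k + zval f R k
        ≤ f (a + chi i - chi j) + f (b - chi i + chi j) :=
          add_le_add (zval_le h2top hsa1) (zval_le h1top hsb1)
      _ ≤ f a + f b := hle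
      _ = zval f R (k-1) + zval f R (k+1) := by
          rw [zval_eq ⟨hfa, hsa, hmina⟩, zval_eq ⟨hfb, hsb, hminb⟩]
end
end

section
/- Let f : ℤ^n → ℝ ∪ {+∞} be an M-convex function with bounded dom f and R ⊆ N with ∅ ≠ R ⊊ N. Then for every integer k with k̲ ≤ k < k̄ and every x ∈ M(k), it holds that φ^R(x) = z(k+1) − z(k). -/
noncomputable section

open scoped BigOperators

/-!
Every `x + χ_i - χ_j` with `i ∈ R`, `j ∉ R` lies on level `k + 1`, which gives
`z(k+1) - z(k) ≤ φ^R(x)`. Conversely, take `y` on level `k + 1` and exchange it with `x` at some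
`i ∈ R` where `y i > x i`. If the partner `j` of the exchange lies outside `R`, the minimality of
`x` on level `k` turns the exchange inequality into `f (x + χ_i - χ_j) ≤ f y`; if `j ∈ R`, it
shows that `y - χ_i + χ_j` is still on level `k + 1`, is no worse than `y` and is closer to `x`,
so one recurses on the ℓ¹-distance to `x`.
-/

open Finset

lemma EReal.le_of_add_le_add_of_le {a b c d : EReal} (hc : c ≠ ⊥) (hc' : c ≠ ⊤)
    (h : a + b ≤ d + c) (hcb : c ≤ b) : a ≤ d := by
  obtain ⟨r, rfl⟩ : ∃ r : ℝ, c = r := ⟨c.toReal, (EReal.coe_toReal hc' hc).symm⟩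
  exact (EReal.addLECancellable_coe r).add_le_add_iff_right.1 ((add_le_add le_rfl hcb).trans h)

section Levels

variable {n : ℕ} {f : (Fin n → ℤ) → EReal} (R : Finset (Fin n))

lemma sumR_add_chi_sub_chi (x : Fin n → ℤ) (i j : Fin n) :
    sumR R (x + chi i - chi j) =
      sumR R x + (if i ∈ R then 1 else 0) - (if j ∈ R then 1 else 0) := by
  simp [sumR, chi, sum_add_distrib, sum_sub_distrib]

lemma zval_le_s9 {m : ℤ} {v : Fin n → ℤ} (hv : sumR R v = m) : zval f R m ≤ f v := by
  by_cases htop : f v = ⊤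
  · simp [htop]
  · exact iInf₂_le v ⟨htop, hv⟩

variable {R}

lemma le_of_mem_Mset {k : ℤ} {x y : Fin n → ℤ} (hx : x ∈ Mset f R k) (hy : sumR R y = k) :
    f x ≤ f y := by
  by_cases htop : f y = ⊤
  · simp [htop]
  · exact hx.2.2 y htop hy

lemma zval_eq_of_mem_Mset {k : ℤ} {x : Fin n → ℤ} (hx : x ∈ Mset f R k) : zval f R k = f x :=
  le_antisymm (zval_le_s9 R hx.2.1) (le_iInf₂ fun _ hy => le_of_mem_Mset hx hy.2)

lemma phiR_le {x : Fin n → ℤ} {i j : Fin n} (hi : i ∈ R) (hj : j ∉ R) :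
    phiR f R x ≤ slopeZ f x i j :=
  iInf₂_le_of_le i hi (iInf₂_le j (mem_compl.mpr hj))

end Levels

lemma sum_natAbs_exchange_lt {n : ℕ} {x y : Fin n → ℤ} {i j : Fin n} (hi : x i < y i)
    (hj : y j < x j) :
    ∑ t, ((y - chi i + chi j) t - x t).natAbs < ∑ t, (y t - x t).natAbs := by
  refine sum_lt_sum (fun t _ => ?_) ⟨i, mem_univ i, ?_⟩ <;>
  · simp only [Pi.add_apply, Pi.sub_apply, chi]
    split_ifs <;> subst_vars <;> omega

theorem exists_step_le_of_mem_Mset {n : ℕ} {f : (Fin n → ℤ) → EReal} (hM : MConvexFn f)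
    {R : Finset (Fin n)} {k : ℤ} {x : Fin n → ℤ} (hx : x ∈ Mset f R k) (hxbot : f x ≠ ⊥)
    {y : Fin n → ℤ} (hy : f y ≠ ⊤) (hyk : sumR R y = k + 1) :
    ∃ i ∈ R, ∃ j ∉ R, f (x + chi i - chi j) ≤ f y := by
  have hxk : sumR R x = k := hx.2.1
  obtain ⟨i, hiR, hi⟩ := exists_lt_of_sum_lt (show sumR R x < sumR R y by omega)
  obtain ⟨j, hj, hexch⟩ := hM.2 y x hy hx.1 i hi
  by_cases hjR : j ∈ R
  · have hx' : f x ≤ f (x + chi i - chi j) :=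
      le_of_mem_Mset hx (by simp [sumR_add_chi_sub_chi, hiR, hjR, hxk])
    have hy' : f (y - chi i + chi j) ≤ f y :=
      EReal.le_of_add_le_add_of_le hxbot hx.1 hexch hx'
    obtain ⟨i', hi', j', hj', hle⟩ := exists_step_le_of_mem_Mset hM hx hxbot
      (ne_top_of_le_ne_top hy hy')
      (by simp [sub_add_eq_add_sub, sumR_add_chi_sub_chi, hiR, hjR, hyk])
    exact ⟨i', hi', j', hj', hle.trans hy'⟩
  · have hy' : f x ≤ f (y - chi i + chi j) :=
      le_of_mem_Mset hx (by simp [sub_add_eq_add_sub, sumR_add_chi_sub_chi, hiR, hjR, hyk])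
    rw [add_comm (f _)] at hexch
    exact ⟨i, hiR, j, hjR, EReal.le_of_add_le_add_of_le hxbot hx.1 hexch hy'⟩
termination_by ∑ t, (y t - x t).natAbs
decreasing_by exact sum_natAbs_exchange_lt hi hj

theorem statement9_general {n : ℕ} (f : (Fin n → ℤ) → EReal)
    (hbot : NoBot f) (hM : MConvexFn f)
    (R : Finset (Fin n))
    (k : ℤ)
    (x : Fin n → ℤ) (hx : x ∈ Mset f R k) :
    phiR f R x = zval f R (k + 1) - zval f R k := by
  obtain ⟨r, hr⟩ : ∃ r : ℝ, f x = r := ⟨_, (EReal.coe_toReal hx.1 (hbot x)).symm⟩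
  rw [zval_eq_of_mem_Mset hx, hr]
  apply le_antisymm
  · rw [EReal.le_sub_iff_add_le (.inl (EReal.coe_ne_bot r)) (.inl (EReal.coe_ne_top r))]
    refine le_iInf₂ fun y ⟨hy, hyk⟩ => ?_
    obtain ⟨i, hi, j, hj, hle⟩ := exists_step_le_of_mem_Mset hM hx (hbot x) hy hyk
    calc phiR f R x + r ≤ slopeZ f x i j + r := add_le_add (phiR_le hi hj) le_rfl
      _ = f (x + chi i - chi j) := by rw [slopeZ, hr, EReal.sub_add_cancel]
      _ ≤ f y := hle
  · refine le_iInf₂ fun i hi => le_iInf₂ fun j hj => ?_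
    rw [slopeZ, hr]
    refine EReal.sub_le_sub (zval_le_s9 R ?_) le_rfl
    simp [sumR_add_chi_sub_chi, hi, mem_compl.mp hj, hx.2.1]

/-- For `k̲ ≤ k < k̄` and `x ∈ M(k)`, the steepest `R`-slopeZ at `x` equals the
increment of the optimal value function: `φ^R(x) = z(k+1) - z(k)`. -/
theorem statement9 {n : ℕ} (hn : 1 ≤ n) (f : (Fin n → ℤ) → EReal)
    (hbot : NoBot f) (hM : MConvexFn f) (hbdd : BddDom f)
    (R : Finset (Fin n)) (hR : R.Nonempty) (hRp : R ≠ Finset.univ)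
    (k : ℤ) (hk1 : kmin f R ≤ k) (hk2 : k < kmax f R)
    (x : Fin n → ℤ) (hx : x ∈ Mset f R k) :
    phiR f R x = zval f R (k + 1) - zval f R k :=
  statement9_general f hbot hM R k x hx
end
end

section
/- Let f : ℝ^n → ℝ ∪ {+∞} be a polyhedral M-convex function with bounded nonempty effective domain. A vector x* ∈ dom f is a minimizer of f if and only if f'_ℝ(x*; i, j) ≥ 0 for all i, j ∈ N. -/
noncomputable section

open scoped BigOperators

/-- The `i`-th unit vector in `ℝ^n`. -/
def chiR {n : ℕ} (i : Fin n) : Fin n → ℝ := fun k => if k = i then 1 else 0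

/-- The function never takes the value `-∞`, i.e. its codomain is `ℝ ∪ {+∞}`. -/
def NoBotR {n : ℕ} (f : (Fin n → ℝ) → EReal) : Prop := ∀ x, f x ≠ ⊥

/-- `f` is polyhedral convex: its epigraph is a nonempty intersection of finitely many
closed affine halfspaces. -/
def PolyhedralConvex {n : ℕ} (f : (Fin n → ℝ) → EReal) : Prop :=
  (∃ (x : Fin n → ℝ) (t : ℝ), f x ≤ (t : EReal)) ∧
  ∃ (m : ℕ) (a : Fin m → Fin n → ℝ) (b c : Fin m → ℝ),
    ∀ (x : Fin n → ℝ) (t : ℝ),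
      f x ≤ (t : EReal) ↔ ∀ k : Fin m, (∑ i, a k i * x i) + b k * t ≤ c k

/-- The exchange axiom (M-EXC[ℝ]). -/
def MExcR {n : ℕ} (f : (Fin n → ℝ) → EReal) : Prop :=
  ∀ x y : Fin n → ℝ, f x ≠ ⊤ → f y ≠ ⊤ →
    ∀ i : Fin n, y i < x i →
      ∃ j : Fin n, x j < y j ∧ ∃ ε₀ : ℝ, 0 < ε₀ ∧
        ∀ ε : ℝ, 0 ≤ ε → ε ≤ ε₀ →
          f (x - ε • (chiR i - chiR j)) + f (y + ε • (chiR i - chiR j)) ≤ f x + f y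

/-- Polyhedral M-convex function. -/
def PolyMConvex {n : ℕ} (f : (Fin n → ℝ) → EReal) : Prop :=
  PolyhedralConvex f ∧ MExcR f

/-- The directional derivative `f'_ℝ(x; i, j) = lim_{α ↓ 0} (f(x + α(χ_i - χ_j)) - f(x))/α`.
For a (polyhedral) convex function the difference quotient is nondecreasing in `α`, so the
limit equals the infimum of the difference quotients over `α > 0`. -/
def slopeR {n : ℕ} (f : (Fin n → ℝ) → EReal) (x : Fin n → ℝ) (i j : Fin n) : EReal :=
  ⨅ α : {a : ℝ // 0 < a}, (f (x + α.1 • (chiR i - chiR j)) - f x) * (((α.1)⁻¹ : ℝ) : EReal)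

/-- `φ_ℝ(x) = min_{i, j ∈ N} f'_ℝ(x; i, j)`. -/
def phiRp {n : ℕ} (f : (Fin n → ℝ) → EReal) (x : Fin n → ℝ) : EReal :=
  ⨅ i : Fin n, ⨅ j : Fin n, slopeR f x i j

/-- Bounded effective domain. -/
def BddDomR {n : ℕ} (f : (Fin n → ℝ) → EReal) : Prop :=
  ∃ C : ℝ, ∀ x : Fin n → ℝ, f x ≠ ⊤ → ∀ i, |x i| ≤ C

/-! The proof goes by contradiction. If some `y` had `f y < f x`, the sublevel set
`{z | f z ≤ f y}` is compact (it is closed because `f` is polyhedral, and it lies in the bounded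
domain), so it contains a point `y₀` at minimal `ℓ₁`-distance from `x`. Exchanging between `x`
and `y₀` moves `y₀` by `ε (χ_i - χ_j)` towards `x`; since the nonnegative slopes at `x` say that
the opposite move of `x` does not decrease `f`, the moved `y₀` stays in the sublevel set,
contradicting the choice of `y₀`. -/

lemma EReal.nonneg_mul_coe_iff {a : EReal} {c : ℝ} (hc : 0 < c) : 0 ≤ a * c ↔ 0 ≤ a := by
  have hc' : ¬ (c : EReal) ≤ 0 := by exact_mod_cast hc.not_ge
  simp only [EReal.mul_nonneg_iff, hc', and_false, or_false, and_iff_left_iff_imp]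
  exact fun _ => by exact_mod_cast hc.le

section

variable {n : ℕ} {f : (Fin n → ℝ) → EReal} {x y : Fin n → ℝ}

lemma slopeR_nonneg_iff (hx : f x ≠ ⊤) (hx' : f x ≠ ⊥) (i j : Fin n) :
    0 ≤ slopeR f x i j ↔ ∀ ε : ℝ, 0 < ε → f x ≤ f (x + ε • (chiR i - chiR j)) := by
  simp only [slopeR, le_iInf_iff, Subtype.forall]
  refine forall₂_congr fun ε hε => ?_
  rw [EReal.nonneg_mul_coe_iff (inv_pos.mpr hε), EReal.sub_nonneg (Or.inr hx) (Or.inr hx')]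

lemma PolyhedralConvex.isClosed_sublevel (hf : PolyhedralConvex f) (t : ℝ) :
    IsClosed {z | f z ≤ t} := by
  obtain ⟨m, a, b, c, hepi⟩ := hf.2
  have hset : {z | f z ≤ t} = ⋂ k, {z : Fin n → ℝ | (∑ i, a k i * z i) + b k * t ≤ c k} := by
    ext z
    simp [hepi]
  rw [hset]
  exact isClosed_iInter fun k => isClosed_le (by fun_prop) continuous_const

lemma PolyhedralConvex.isCompact_sublevel (hf : PolyhedralConvex f) (hbdd : BddDomR f) (t : ℝ) :
    IsCompact {z | f z ≤ t} := by
  obtain ⟨C, hC⟩ := hbdd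
  refine (isCompact_univ_pi fun _ => isCompact_Icc (a := -C) (b := C)).of_isClosed_subset
    (hf.isClosed_sublevel t) fun z hz i _ => abs_le.mp (hC z ?_ i)
  exact ne_top_of_le_ne_top (EReal.coe_ne_top t) hz

lemma sub_smul_chiR_sub (z : Fin n → ℝ) (ε : ℝ) (i j : Fin n) :
    z - ε • (chiR i - chiR j) = z + ε • (chiR j - chiR i) := by
  rw [sub_eq_add_neg, ← smul_neg, neg_sub]

lemma MExcR.exists_exchange (hf : MExcR f) (hx : f x ≠ ⊤) (hy : f y ≠ ⊤) (hxy : x ≠ y) :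
    ∃ i j, y i < x i ∧ x j < y j ∧ ∃ ε₀ : ℝ, 0 < ε₀ ∧ ∀ ε : ℝ, 0 ≤ ε → ε ≤ ε₀ →
      f (x - ε • (chiR i - chiR j)) + f (y + ε • (chiR i - chiR j)) ≤ f x + f y := by
  obtain ⟨i, hi⟩ := Function.ne_iff.mp hxy
  rcases hi.lt_or_gt with hlt | hgt
  · obtain ⟨j, hj, ε₀, hε₀, hexc⟩ := hf y x hy hx i hlt
    refine ⟨j, i, hj, hlt, ε₀, hε₀, fun ε h₀ h₁ => ?_⟩
    rw [sub_smul_chiR_sub x ε j i, ← sub_smul_chiR_sub y ε i j, add_comm, add_comm (f x)]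
    exact hexc ε h₀ h₁
  · obtain ⟨j, hj, ε₀, hε₀, hexc⟩ := hf x y hx hy i hgt
    exact ⟨i, j, hgt, hj, ε₀, hε₀, hexc⟩

def l1Dist (x y : Fin n → ℝ) : ℝ := ∑ k, |x k - y k|

lemma l1Dist_add_smul_lt {i j : Fin n} {ε : ℝ} (hε : 0 < ε) (hi : ε ≤ x i - y i)
    (hj : ε ≤ y j - x j) : l1Dist x (y + ε • (chiR i - chiR j)) < l1Dist x y := by
  have hij : i ≠ j := by rintro rfl; linarith
  refine Finset.sum_lt_sum (fun k _ => ?_) ⟨i, Finset.mem_univ i, ?_⟩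
  · simp only [Pi.add_apply, Pi.smul_apply, Pi.sub_apply, chiR, smul_eq_mul]
    split_ifs with hki hkj <;> subst_vars <;> norm_num <;> grind
  · simp only [Pi.add_apply, Pi.smul_apply, Pi.sub_apply, chiR, smul_eq_mul, if_neg hij]
    grind

lemma exists_l1Dist_lt_of_slopeR_nonneg (hf : MExcR f) (hx : f x ≠ ⊤) (hx' : f x ≠ ⊥)
    (hslope : ∀ i j, 0 ≤ slopeR f x i j) (hy : f y ≠ ⊤) (hxy : x ≠ y) :
    ∃ z, f z ≤ f y ∧ l1Dist x z < l1Dist x y := by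
  obtain ⟨i, j, hi, hj, ε₀, hε₀, hexc⟩ := hf.exists_exchange hx hy hxy
  set ε := min ε₀ (min (x i - y i) (y j - x j))
  have hε : 0 < ε := lt_min hε₀ (lt_min (by linarith) (by linarith))
  refine ⟨y + ε • (chiR i - chiR j), ?_, l1Dist_add_smul_lt hε ?_ ?_⟩
  · have hmove : f x ≤ f (x - ε • (chiR i - chiR j)) := by
      rw [sub_smul_chiR_sub]
      exact (slopeR_nonneg_iff hx hx' j i).1 (hslope j i) ε hε
    have hsum := (add_le_add_left hmove _).trans (hexc ε hε.le (min_le_left _ _))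
    rw [← EReal.coe_toReal hx hx'] at hsum
    exact (EReal.addLECancellable_coe _).add_le_add_iff_left.1 hsum
  · exact (min_le_right _ _).trans (min_le_left _ _)
  · exact (min_le_right _ _).trans (min_le_right _ _)

end

theorem statement13_general {n : ℕ} (f : (Fin n → ℝ) → EReal)
    (hbot : NoBotR f) (hM : PolyMConvex f) (hbdd : BddDomR f)
    (x : Fin n → ℝ) (hx : f x ≠ ⊤) :
    (∀ y : Fin n → ℝ, f x ≤ f y) ↔ ∀ i j : Fin n, 0 ≤ slopeR f x i j := by
  refine ⟨fun hmin i j => (slopeR_nonneg_iff hx (hbot x) i j).2 fun ε _ => hmin _,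
    fun hslope y => ?_⟩
  by_contra! hyx
  set s := (f y).toReal
  have hs : f y = s := (EReal.coe_toReal hyx.ne_top (hbot y)).symm
  have hdist : Continuous (l1Dist x) := by unfold l1Dist; fun_prop
  obtain ⟨y₀, hy₀, hy₀_min⟩ := (hM.1.isCompact_sublevel hbdd s).exists_isMinOn
    ⟨y, hs.le⟩ hdist.continuousOn
  have hy₀x : x ≠ y₀ := by
    rintro rfl
    exact hyx.not_ge (hs ▸ hy₀)
  obtain ⟨z, hz, hzy₀⟩ := exists_l1Dist_lt_of_slopeR_nonneg hM.2 hx (hbot x) hslope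
    (ne_top_of_le_ne_top (EReal.coe_ne_top s) hy₀) hy₀x
  exact hzy₀.not_ge (hy₀_min (hz.trans hy₀))

/-- A point `x* ∈ dom f` of a polyhedral M-convex function with bounded nonempty effective
domain is a global minimizer iff `f'_ℝ(x*; i, j) ≥ 0` for all `i, j ∈ N`. -/
theorem statement13 {n : ℕ} (hn : 1 ≤ n) (f : (Fin n → ℝ) → EReal)
    (hbot : NoBotR f) (hM : PolyMConvex f) (hbdd : BddDomR f)
    (x : Fin n → ℝ) (hx : f x ≠ ⊤) :
    (∀ y : Fin n → ℝ, f x ≤ f y) ↔ ∀ i j : Fin n, 0 ≤ slopeR f x i j :=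
  statement13_general f hbot hM hbdd x hx
end
end

section
/- Let f : ℝ^n → ℝ ∪ {+∞} be a polyhedral M-convex function with bounded nonempty effective domain. Let y ∈ dom f with φ_ℝ(y) < 0, let i, j ∈ N be distinct elements such that f'_ℝ(y; i, j) = φ_ℝ(y), and let λ > 0 be a real number such that f(y + λ(χ_i − χ_j)) − f(y) = λ φ_ℝ(y). Then the vector ŷ = y + λ(χ_i − χ_j) satisfies φ_ℝ(ŷ) ≥ φ_ℝ(y). -/
noncomputable section

open scoped BigOperators

/-!
The heart of the proof is a global bound: if every slope `f'_ℝ(y; i, j)` is at least `φ`, then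
`f z ≥ f y + φ · ‖(z - y)⁺‖₁` for all `z`. If some `z₀` violated it, the set `A` of points
violating it at least as badly as `z₀` is closed (the epigraph is polyhedral) and bounded (the
domain is), so it contains a point `z` minimising `‖(z - y)⁺‖₁`. Then `z ≠ y`, and the exchange
axiom for `z` and `y` yields a step `z - ε(χ_i - χ_j)` which decreases `‖(z - y)⁺‖₁` by `ε`
while, paired with `f(y + ε(χ_i - χ_j)) ≥ f y + εφ`, it stays in `A`: a contradiction.

At `ŷ = y + λ(χ_i - χ_j)` we have `f ŷ = f y + λφ`, and every `x = ŷ + α(χ_k - χ_l)` satisfies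
`‖(x - y)⁺‖₁ ≤ λ + α`; as `φ < 0` the global bound gives `f x - f ŷ ≥ αφ`.
-/

namespace EReal

lemma coe_le_sub_coe_mul_inv_iff {a : EReal} {c φ α : ℝ} (hα : 0 < α) :
    (φ : EReal) ≤ (a - c) * ((α⁻¹ : ℝ) : EReal) ↔ ((c + α * φ : ℝ) : EReal) ≤ a := by
  have hα' : (0 : EReal) < ((α⁻¹ : ℝ) : EReal) := by exact_mod_cast inv_pos.mpr hα
  induction a using EReal.rec with
  | bot => simp only [EReal.bot_sub, EReal.bot_mul_of_pos hα', le_bot_iff, EReal.coe_ne_bot]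
  | top => simp [EReal.top_mul_of_pos hα']
  | coe a =>
    norm_cast
    rw [le_mul_inv_iff₀ hα]
    constructor <;> intro h <;> linarith

lemma le_coe_sub_of_add_le {a b : EReal} {r c e : ℝ} (h : a + b ≤ ((r + c : ℝ) : EReal))
    (hb : ((c + e : ℝ) : EReal) ≤ b) (ha : a ≠ ⊥) : a ≤ ((r - e : ℝ) : EReal) := by
  induction b using EReal.rec with
  | bot => simp at hb
  | top => simp [EReal.add_top_of_ne_bot ha, -EReal.coe_add] at h
  | coe b =>
    induction a using EReal.rec with
    | bot => exact absurd rfl ha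
    | top => simp [-EReal.coe_add] at h
    | coe a =>
      norm_cast at h hb ⊢
      linarith

lemma exists_coe_of_sub_coe_eq_coe_mul {a p : EReal} {c lam : ℝ} (hlam : 0 < lam)
    (h : a - c = lam * p) (ha : a ≠ ⊥) (hp : p ≠ ⊤) :
    ∃ φ : ℝ, p = φ ∧ a = ((c + lam * φ : ℝ) : EReal) := by
  induction p using EReal.rec with
  | bot =>
    rw [EReal.coe_mul_bot_of_pos hlam] at h
    induction a using EReal.rec with
    | bot => exact absurd rfl ha
    | top => simp at h
    | coe a => exact absurd h (EReal.coe_ne_bot _)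
  | top => exact absurd rfl hp
  | coe φ =>
    refine ⟨φ, rfl, ?_⟩
    induction a using EReal.rec with
    | bot => exact absurd rfl ha
    | top => simp [← EReal.coe_mul] at h
    | coe a =>
      norm_cast at h ⊢
      linarith

end EReal

section

variable {n : ℕ}

def posExcess (y z : Fin n → ℝ) : ℝ := ∑ s, max (z s - y s) 0

lemma continuous_posExcess (y : Fin n → ℝ) : Continuous (posExcess y) :=
  continuous_finsetSum _ fun s _ =>
    ((continuous_apply s).sub continuous_const).max continuous_const

@[simp]
lemma posExcess_self (y : Fin n → ℝ) : posExcess y y = 0 := by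
  simp [posExcess]

lemma posExcess_add_smul_le (y x : Fin n → ℝ) {α : ℝ} (hα : 0 ≤ α) (k l : Fin n) :
    posExcess y (x + α • (chiR k - chiR l)) ≤ posExcess y x + α := by
  calc posExcess y (x + α • (chiR k - chiR l))
      ≤ ∑ s, (max (x s - y s) 0 + α * if s = k then 1 else 0) := by
        refine Finset.sum_le_sum fun s _ => ?_
        simp only [Pi.add_apply, Pi.sub_apply, Pi.smul_apply, smul_eq_mul, chiR]
        have := le_max_left (x s - y s) 0
        have := le_max_right (x s - y s) 0
        apply max_le <;> split_ifs <;> nlinarith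
    _ = posExcess y x + α := by simp [Finset.sum_add_distrib, posExcess]

lemma posExcess_sub_smul (y z : Fin n → ℝ) {ε : ℝ} {i j : Fin n} (hε : 0 < ε)
    (hi : ε ≤ z i - y i) (hj : ε ≤ y j - z j) :
    posExcess y (z - ε • (chiR i - chiR j)) = posExcess y z - ε := by
  have hij : i ≠ j := by rintro rfl; linarith
  calc posExcess y (z - ε • (chiR i - chiR j))
      = ∑ s, (max (z s - y s) 0 - if s = i then ε else 0) := by
        refine Finset.sum_congr rfl fun s _ => ?_
        simp only [Pi.sub_apply, Pi.smul_apply, smul_eq_mul, chiR]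
        by_cases hsi : s = i
        · subst hsi
          simp only [if_pos, if_neg hij]
          rw [max_eq_left (by linarith), max_eq_left (by linarith)]
          ring
        by_cases hsj : s = j
        · subst hsj
          simp only [if_pos, if_neg hsi]
          rw [max_eq_right (by linarith), max_eq_right (by linarith)]
          ring
        simp [hsi, hsj]
    _ = posExcess y z - ε := by simp [Finset.sum_sub_distrib, posExcess]

end

section

variable {n : ℕ} {f : (Fin n → ℝ) → EReal}

lemma NoBotR.exists_eq_coe (hbot : NoBotR f) {x : Fin n → ℝ} (hx : f x ≠ ⊤) : ∃ r : ℝ, f x = r :=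
  ⟨(f x).toReal, (EReal.coe_toReal hx (hbot x)).symm⟩

lemma coe_le_phiRp_iff {y : Fin n → ℝ} {c : ℝ} (hy : f y = c) (φ : ℝ) :
    (φ : EReal) ≤ phiRp f y ↔
      ∀ i j : Fin n, ∀ α > 0, ((c + α * φ : ℝ) : EReal) ≤ f (y + α • (chiR i - chiR j)) := by
  simp only [phiRp, slopeR, le_iInf_iff, Subtype.forall, hy]
  exact forall₂_congr fun i j => forall₂_congr fun α hα => EReal.coe_le_sub_coe_mul_inv_iff hα

lemma PolyhedralConvex.isClosed_setOf_le (hf : PolyhedralConvex f)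
    {g : (Fin n → ℝ) → ℝ} (hg : Continuous g) : IsClosed {z | f z ≤ g z} := by
  obtain ⟨-, m, a, b, c, hepi⟩ := hf
  have hA : {z | f z ≤ g z} = ⋂ k : Fin m, {z | (∑ i, a k i * z i) + b k * g z ≤ c k} := by
    ext z
    simp only [Set.mem_ofPred_eq, Set.mem_iInter, hepi]
  rw [hA]
  refine isClosed_iInter fun k => isClosed_le ?_ continuous_const
  fun_prop

lemma BddDomR.isCompact_of_isClosed (hf : BddDomR f) {A : Set (Fin n → ℝ)}
    (hA : IsClosed A) (hAdom : ∀ z ∈ A, f z ≠ ⊤) : IsCompact A := by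
  obtain ⟨C, hC⟩ := hf
  refine (isCompact_closedBall 0 (max C 0)).of_isClosed_subset hA fun z hz => ?_
  rw [mem_closedBall_zero_iff, pi_norm_le_iff_of_nonneg (le_max_right C 0)]
  exact fun s => (Real.norm_eq_abs _).trans_le ((hC z (hAdom z hz) s).trans (le_max_left C 0))

lemma MExcR.exists_lt_of_ne (hf : MExcR f) {y z : Fin n → ℝ} (hy : f y ≠ ⊤) (hz : f z ≠ ⊤)
    (hzy : z ≠ y) : ∃ s, y s < z s := by
  by_contra! hle
  obtain ⟨s, hs⟩ := Function.ne_iff.mp hzy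
  obtain ⟨j, hj, -⟩ := hf y z hy hz s ((hle s).lt_of_ne hs)
  exact (hle j).not_gt hj

lemma MExcR.exists_posExcess_descent (hf : MExcR f) (hbot : NoBotR f)
    {y z : Fin n → ℝ} {c r φ : ℝ} (hy : f y = c) (hz : f z = r) (hzy : z ≠ y)
    (hloc : ∀ i j : Fin n, ∀ α > 0, ((c + α * φ : ℝ) : EReal) ≤ f (y + α • (chiR i - chiR j))) :
    ∃ ε > 0, ∃ z', posExcess y z' = posExcess y z - ε ∧ f z' ≤ ((r - ε * φ : ℝ) : EReal) := by
  have hy' : f y ≠ ⊤ := hy ▸ EReal.coe_ne_top c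
  have hz' : f z ≠ ⊤ := hz ▸ EReal.coe_ne_top r
  obtain ⟨i, hi⟩ := hf.exists_lt_of_ne hy' hz' hzy
  obtain ⟨j, hj, ε₀, hε₀, hexc⟩ := hf z y hz' hy' i hi
  set ε := min ε₀ (min (z i - y i) (y j - z j))
  have hε : 0 < ε := lt_min hε₀ (lt_min (by linarith) (by linarith))
  refine ⟨ε, hε, z - ε • (chiR i - chiR j), ?_, ?_⟩
  · exact posExcess_sub_smul y z hε ((min_le_right _ _).trans (min_le_left _ _))
      ((min_le_right _ _).trans (min_le_right _ _))
  · have hsum := hexc ε hε.le (min_le_left _ _)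
    rw [hz, hy, ← EReal.coe_add] at hsum
    exact EReal.le_coe_sub_of_add_le hsum (hloc i j ε hε) (hbot _)

theorem PolyMConvex.coe_add_mul_posExcess_le (hM : PolyMConvex f) (hbot : NoBotR f)
    (hbdd : BddDomR f) {y : Fin n → ℝ} {c φ : ℝ} (hy : f y = c)
    (hφ : (φ : EReal) ≤ phiRp f y) (z₀ : Fin n → ℝ) :
    ((c + φ * posExcess y z₀ : ℝ) : EReal) ≤ f z₀ := by
  by_contra! hlt
  obtain ⟨r₀, hr₀⟩ := hbot.exists_eq_coe hlt.ne_top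
  set t := r₀ - φ * posExcess y z₀
  have htc : t < c := by
    rw [hr₀, EReal.coe_lt_coe_iff] at hlt
    linarith
  set A := {z | f z ≤ ((t + φ * posExcess y z : ℝ) : EReal)}
  have hAdom : ∀ z ∈ A, f z ≠ ⊤ := fun z hz => ne_top_of_le_ne_top (EReal.coe_ne_top _) hz
  have hAcpt : IsCompact A := hbdd.isCompact_of_isClosed
    (hM.1.isClosed_setOf_le (continuous_const.add (continuous_const.mul (continuous_posExcess y))))
    hAdom
  have hz₀A : z₀ ∈ A := by
    show f z₀ ≤ _
    rw [hr₀, EReal.coe_le_coe_iff]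
    linarith
  obtain ⟨z, hzA, hzmin⟩ :=
    hAcpt.exists_isMinOn ⟨z₀, hz₀A⟩ (continuous_posExcess y).continuousOn
  obtain ⟨r, hr⟩ := hbot.exists_eq_coe (hAdom z hzA)
  have hzA' : r ≤ t + φ * posExcess y z := by
    have : f z ≤ _ := hzA
    rwa [hr, EReal.coe_le_coe_iff] at this
  have hzy : z ≠ y := by
    rintro rfl
    rw [hr, EReal.coe_eq_coe_iff] at hy
    simp only [posExcess_self, mul_zero, add_zero] at hzA'
    linarith
  obtain ⟨ε, hε, z', hz'D, hz'f⟩ :=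
    hM.2.exists_posExcess_descent hbot hy hr hzy ((coe_le_phiRp_iff hy φ).1 hφ)
  have hz'A : z' ∈ A := by
    show f z' ≤ _
    refine hz'f.trans (EReal.coe_le_coe_iff.2 ?_)
    rw [hz'D]
    linarith
  have : posExcess y z ≤ posExcess y z' := hzmin hz'A
  linarith

end

theorem statement15_general {n : ℕ} (f : (Fin n → ℝ) → EReal)
    (hbot : NoBotR f) (hM : PolyMConvex f) (hbdd : BddDomR f)
    (y : Fin n → ℝ) (hy : f y ≠ ⊤) (hphi : phiRp f y < 0)
    (i j : Fin n)
    (lam : ℝ) (hlam : 0 < lam)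
    (hstep : f (y + lam • (chiR i - chiR j)) - f y = (lam : EReal) * phiRp f y) :
    phiRp f y ≤ phiRp f (y + lam • (chiR i - chiR j)) := by
  obtain ⟨c, hc⟩ := hbot.exists_eq_coe hy
  rw [hc] at hstep
  obtain ⟨φ, hφ, hstep⟩ :=
    EReal.exists_coe_of_sub_coe_eq_coe_mul hlam hstep (hbot _) hphi.ne_top
  rw [hφ, EReal.coe_neg'] at hphi
  rw [hφ, coe_le_phiRp_iff hstep]
  intro k l α hα
  have hexcess : posExcess y (y + lam • (chiR i - chiR j) + α • (chiR k - chiR l)) ≤ lam + α :=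
    calc _ ≤ posExcess y (y + lam • (chiR i - chiR j)) + α := posExcess_add_smul_le _ _ hα.le k l
      _ ≤ posExcess y y + lam + α := by gcongr; exact posExcess_add_smul_le _ _ hlam.le i j
      _ = lam + α := by simp
  calc ((c + lam * φ + α * φ : ℝ) : EReal)
      ≤ ((c + φ * posExcess y (y + lam • (chiR i - chiR j) + α • (chiR k - chiR l)) : ℝ) :
          EReal) := EReal.coe_le_coe_iff.2 (by nlinarith)
    _ ≤ _ := hM.coe_add_mul_posExcess_le hbot hbdd hc hφ.ge _

/-- Monotonicity of the steepest descent slope under a long step: if `+χ_i - χ_j` is a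
steepest descent direction at `y` with `φ_ℝ(y) < 0` and
`f(y + λ(χ_i - χ_j)) - f(y) = λ φ_ℝ(y)` for some `λ > 0`, then
`φ_ℝ(y + λ(χ_i - χ_j)) ≥ φ_ℝ(y)`. -/
theorem statement15 {n : ℕ} (hn : 1 ≤ n) (f : (Fin n → ℝ) → EReal)
    (hbot : NoBotR f) (hM : PolyMConvex f) (hbdd : BddDomR f)
    (y : Fin n → ℝ) (hy : f y ≠ ⊤) (hphi : phiRp f y < 0)
    (i j : Fin n) (hij : i ≠ j) (hd : slopeR f y i j = phiRp f y)
    (lam : ℝ) (hlam : 0 < lam)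
    (hstep : f (y + lam • (chiR i - chiR j)) - f y = (lam : EReal) * phiRp f y) :
    phiRp f y ≤ phiRp f (y + lam • (chiR i - chiR j)) :=
  statement15_general f hbot hM hbdd y hy hphi i j lam hlam hstep
end
end
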